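/- arXiv:2304.00915 — 2 statements merged into one kernel-verified Lean document; each statement's English description precedes it below -/
import Mathlib

section
/- Suppose M is nonnegative with positive row sums, |M_i w| ≤ 1 for all i, β > 0, and u⁰ ∈ ℝⁿ satisfies sat(u⁰) = -M w - (M𝟙)·t componentwise where t = β·Σ_i dz(u⁰_i), and either dz(u⁰_i) ≥ 0 for all i or dz(u⁰_i) ≤ 0 for all i. Then t = 0, dz(u⁰) = 0, and u⁰ = -M w. -/
open Finset Matrix

noncomputable def sat (u : ℝ) : ℝ := max (min u 1) (-1)
noncomputable def dz (u : ℝ) : ℝ := u - sat u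

lemma sat_eq_one_of_dz_pos {u : ℝ} (h : 0 < dz u) : sat u = 1 := by
  unfold dz sat at *
  rcases le_or_gt u 1 with h1 | h1
  · rw [min_eq_left h1] at h
    have := le_max_left u (-1)
    linarith
  · rw [min_eq_right h1.le]
    exact max_eq_left (by linarith)

lemma sat_eq_neg_one_of_dz_neg {u : ℝ} (h : dz u < 0) : sat u = -1 := by
  unfold dz sat at *
  rcases le_or_gt (-1 : ℝ) u with h1 | h1
  · exfalso
    have hle : max (min u 1) (-1) ≤ u := max_le (min_le_left u 1) h1
    linarith
  · rw [min_eq_left (by linarith)]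
    exact max_eq_right h1.le

theorem stmt9 {n : ℕ} (M : Matrix (Fin n) (Fin n) ℝ) (w : Fin n → ℝ) (β t : ℝ)
    (u0 : Fin n → ℝ)
    (hM : ∀ i j, 0 ≤ M i j) (hrow : ∀ i, 0 < ∑ l, M i l) (hβ : 0 < β)
    (hbnd : ∀ i, |M.mulVec w i| ≤ 1)
    (ht : t = β * ∑ i, dz (u0 i))
    (hsat : ∀ i, sat (u0 i) = -(M.mulVec w i) - (∑ l, M i l) * t)
    (hsign : (∀ i, 0 ≤ dz (u0 i)) ∨ (∀ i, dz (u0 i) ≤ 0)) :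
    t = 0 ∧ (∀ i, dz (u0 i) = 0) ∧ ∀ i, u0 i = -(M.mulVec w i) := by
  have hdz0 : ∀ i, dz (u0 i) = 0 ∧ t = 0 → True := fun _ _ => trivial
  have ht0 : t = 0 := by
    rcases hsign with hp | hn
    · by_contra h
      have hsum : 0 ≤ ∑ i, dz (u0 i) := Finset.sum_nonneg fun i _ => hp i
      have htge : 0 ≤ t := by rw [ht]; exact mul_nonneg hβ.le hsum
      have htpos : 0 < t := lt_of_le_of_ne htge (Ne.symm h)
      have hspos : 0 < ∑ i, dz (u0 i) := by
        rcases hsum.lt_or_eq with h' | h'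
        · exact h'
        · exfalso; rw [ht, ← h'] at htpos; simp at htpos
      obtain ⟨i, hi⟩ : ∃ i, 0 < dz (u0 i) := by
        by_contra hc
        push_neg at hc
        have : ∑ i, dz (u0 i) ≤ 0 := Finset.sum_nonpos fun i _ => hc i
        linarith
      have h1 := sat_eq_one_of_dz_pos hi
      have h2 := hsat i
      have h3 := abs_le.mp (hbnd i)
      have h4 : 0 < (∑ l, M i l) * t := mul_pos (hrow i) htpos
      rw [h1] at h2
      linarith [h3.1]
    · by_contra h
      have hsum : ∑ i, dz (u0 i) ≤ 0 := Finset.sum_nonpos fun i _ => hn i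
      have htneg : t < 0 := by
        rcases (mul_nonpos_of_nonneg_of_nonpos hβ.le hsum).lt_or_eq with h' | h'
        · rwa [ht]
        · exact absurd (ht.trans h') h
      have hsneg : ∑ i, dz (u0 i) < 0 := by
        rcases hsum.lt_or_eq with h' | h'
        · exact h'
        · exfalso; rw [ht, h'] at htneg; simp at htneg
      obtain ⟨i, hi⟩ : ∃ i, dz (u0 i) < 0 := by
        by_contra hc
        push_neg at hc
        have : 0 ≤ ∑ i, dz (u0 i) := Finset.sum_nonneg fun i _ => hc i
        linarith
      have h1 := sat_eq_neg_one_of_dz_neg hi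
      have h2 := hsat i
      have h3 := abs_le.mp (hbnd i)
      have h4 : (∑ l, M i l) * t < 0 := mul_neg_of_pos_of_neg (hrow i) htneg
      rw [h1] at h2
      linarith [h3.2]
  have hsum0 : ∑ i, dz (u0 i) = 0 := by
    have := ht.symm.trans ht0
    rcases mul_eq_zero.mp this with h | h
    · exact absurd h (ne_of_gt hβ)
    · exact h
  have hdz : ∀ i, dz (u0 i) = 0 := by
    rcases hsign with hp | hn
    · intro i
      exact (Finset.sum_eq_zero_iff_of_nonneg (fun i _ => hp i)).mp hsum0 i (Finset.mem_univ i)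
    · intro i
      exact (Finset.sum_eq_zero_iff_of_nonpos (fun i _ => hn i)).mp hsum0 i (Finset.mem_univ i)
  refine ⟨ht0, hdz, fun i => ?_⟩
  have h1 := hsat i
  rw [ht0] at h1
  have h2 : u0 i = sat (u0 i) := by
    have := hdz i
    unfold dz at this
    linarith
  rw [h2, h1]; ring
end

section
/- Under Assumptions on w (strict condition max_i (M_i w - 1)/(M_i 𝟙) < min_j (M_j w + 1)/(M_j 𝟙), and either dz(Mw) = 0 or the maximizer k of |dz(M_i w)|/(M_i 𝟙) is unique), the equilibrium equations 0 = -x⁰ + B·sat(u⁰) + w, 0 = x⁰ + β𝟙𝟙ᵀdz(u⁰) have a unique solution (x⁰, u⁰), given by the candidate x⁰ = 𝟙·dz(M_k w)/(M_k 𝟙), u⁰_k = -sat(M_k w) - dz(M_k w)/(β M_k 𝟙), u⁰_i = -M_i w + (M_i 𝟙/M_k 𝟙)dz(M_k w) for i ≠ k. -/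
open Finset Matrix

lemma sat_le_one (u : ℝ) : sat u ≤ 1 := max_le (min_le_right _ _) (by norm_num)
lemma neg_one_le_sat (u : ℝ) : -1 ≤ sat u := le_max_right _ _
lemma sat_add_dz (u : ℝ) : sat u + dz u = u := by unfold dz; ring
lemma satdz_cases (u : ℝ) :
    (1 ≤ u ∧ sat u = 1 ∧ dz u = u - 1) ∨
    (u ≤ -1 ∧ sat u = -1 ∧ dz u = u + 1) ∨
    (-1 ≤ u ∧ u ≤ 1 ∧ sat u = u ∧ dz u = 0) := by
  unfold dz sat
  rcases le_total 1 u with h | h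
  · have h1 : min u 1 = 1 := min_eq_right h
    have h2 : max (1:ℝ) (-1) = 1 := by norm_num
    rw [h1, h2]
    exact Or.inl ⟨h, rfl, rfl⟩
  · rcases le_total u (-1) with h2 | h2
    · have h1 : min u 1 = u := min_eq_left h
      have h3 : max u (-1) = -1 := max_eq_right h2
      rw [h1, h3]
      exact Or.inr (Or.inl ⟨h2, rfl, by ring⟩)
    · have h1 : min u 1 = u := min_eq_left h
      have h3 : max u (-1) = u := max_eq_left h2
      rw [h1, h3]
      exact Or.inr (Or.inr ⟨h2, h, rfl, by ring⟩)
lemma sat_of_one_le {u : ℝ} (h : 1 ≤ u) : sat u = 1 ∧ dz u = u - 1 := by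
  rcases satdz_cases u with ⟨_, h1, h2⟩ | ⟨h0, _, _⟩ | ⟨_, h0, h1, h2⟩
  · exact ⟨h1, h2⟩
  · linarith
  · have : u = 1 := le_antisymm h0 h
    exact ⟨by rw [h1, this], by rw [h2]; linarith⟩
lemma sat_of_le_neg_one {u : ℝ} (h : u ≤ -1) : sat u = -1 ∧ dz u = u + 1 := by
  rcases satdz_cases u with ⟨h0, _, _⟩ | ⟨_, h1, h2⟩ | ⟨h0, _, h1, h2⟩
  · linarith
  · exact ⟨h1, h2⟩
  · have : u = -1 := le_antisymm h h0
    exact ⟨by rw [h1, this], by rw [h2]; linarith⟩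
lemma sat_of_mem {u : ℝ} (h1 : -1 ≤ u) (h2 : u ≤ 1) : sat u = u ∧ dz u = 0 := by
  rcases satdz_cases u with ⟨h0, ha, hb⟩ | ⟨h0, ha, hb⟩ | ⟨_, _, ha, hb⟩
  · have : u = 1 := le_antisymm h2 h0
    exact ⟨by rw [ha, this], by rw [hb]; linarith⟩
  · have : u = -1 := le_antisymm h0 h1
    exact ⟨by rw [ha, this], by rw [hb]; linarith⟩
  · exact ⟨ha, hb⟩

set_option maxHeartbeats 3200000 in
theorem stmt10 {n : ℕ} (B M : Matrix (Fin n) (Fin n) ℝ) (w : Fin n → ℝ) (β : ℝ) (k : Fin n)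
    (hβ : 0 < β) (hB : IsUnit B) (hMB : M = B⁻¹)
    (hM : ∀ i j, 0 ≤ M i j) (hrow : ∀ i, 0 < ∑ l, M i l)
    (hw : ∀ i j, (M.mulVec w i - 1) / (∑ l, M i l) < (M.mulVec w j + 1) / (∑ l, M j l))
    (hk : ∀ i, |dz (M.mulVec w i)| / (∑ l, M i l) ≤ |dz (M.mulVec w k)| / (∑ l, M k l))
    (huniq : (∀ i, dz (M.mulVec w i) = 0) ∨
      (∀ i, i ≠ k →
        |dz (M.mulVec w i)| / (∑ l, M i l) < |dz (M.mulVec w k)| / (∑ l, M k l)))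
    (x0 u0 : Fin n → ℝ)
    (hx0 : ∀ i, x0 i = dz (M.mulVec w k) / (∑ l, M k l))
    (hu0k : u0 k = -sat (M.mulVec w k) - dz (M.mulVec w k) / (β * ∑ l, M k l))
    (hu0 : ∀ i, i ≠ k →
      u0 i = -(M.mulVec w i) + ((∑ l, M i l) / (∑ l, M k l)) * dz (M.mulVec w k)) :
    ((∀ i, -x0 i + B.mulVec (fun m => sat (u0 m)) i + w i = 0) ∧
      (∀ i, x0 i + β * ∑ m, dz (u0 m) = 0)) ∧
    ∀ x u : Fin n → ℝ,
      (∀ i, -x i + B.mulVec (fun m => sat (u m)) i + w i = 0) →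
      (∀ i, x i + β * ∑ m, dz (u m) = 0) →
      x = x0 ∧ u = u0 := by
  classical
  set v : Fin n → ℝ := M.mulVec w with hvdef
  set s : Fin n → ℝ := fun i => ∑ l, M i l with hsdef
  have hs : ∀ i, 0 < s i := hrow
  set c0 : ℝ := dz (v k) / s k with hc0def
  -- matrix inverse facts
  have hdet : IsUnit B.det := (Matrix.isUnit_iff_isUnit_det B).mp hB
  have hBMone : B * M = 1 := by rw [hMB]; exact Matrix.mul_nonsing_inv B hdet
  have hMBone : M * B = 1 := by rw [hMB]; exact Matrix.nonsing_inv_mul B hdet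
  have hBM : ∀ z : Fin n → ℝ, B.mulVec (M.mulVec z) = z := by
    intro z; rw [Matrix.mulVec_mulVec, hBMone, Matrix.one_mulVec]
  have hMBv : ∀ z : Fin n → ℝ, M.mulVec (B.mulVec z) = z := by
    intro z; rw [Matrix.mulVec_mulVec, hMBone, Matrix.one_mulVec]
  -- computation of M *v (c - w)
  have hcomp : ∀ (c' : ℝ) (i : Fin n), M.mulVec (fun j => c' - w j) i = c' * s i - (v i) := by
    intro c' i
    show ∑ j, M i j * (c' - w j) = c' * s i - v i
    have h1 : ∀ j, M i j * (c' - w j) = M i j * c' - M i j * w j := fun j => by ring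
    rw [Finset.sum_congr rfl (fun j _ => h1 j), Finset.sum_sub_distrib, ← Finset.sum_mul]
    have h2 : v i = ∑ j, M i j * w j := rfl
    rw [← h2]; ring
  -- multiplicative versions of hypotheses
  have hw' : ∀ i j, (v i - 1) * s j < (v j + 1) * s i :=
    fun i j => (div_lt_div_iff₀ (hs i) (hs j)).mp (hw i j)
  have hk' : ∀ i, |dz (v i)| * s k ≤ |dz (v k)| * s i :=
    fun i => (div_le_div_iff₀ (hs i) (hs k)).mp (hk i)
  have hc0k : c0 * s k = dz (v k) := div_mul_cancel₀ _ (ne_of_gt (hs k))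
  -- key bounds on c0
  have hAB : ∀ i, (v i - 1) ≤ c0 * s i ∧ c0 * s i ≤ v i + 1 := by
    intro i
    rcases satdz_cases (v k) with ⟨h1, hsk, hdk⟩ | ⟨h1, hsk, hdk⟩ | ⟨h1, h1', hsk, hdk⟩
    · -- 1 ≤ v k
      have hdknn : 0 ≤ dz (v k) := by rw [hdk]; linarith
      have hc0nn : 0 ≤ c0 := div_nonneg hdknn (le_of_lt (hs k))
      constructor
      · rcases le_total (v i) 1 with h2 | h2
        · nlinarith [hs i]
        · have hdzi : dz (v i) = v i - 1 := (sat_of_one_le h2).2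
          have habs : |dz (v i)| = v i - 1 := by rw [hdzi]; exact abs_of_nonneg (by linarith)
          have habsk : |dz (v k)| = dz (v k) := abs_of_nonneg hdknn
          have := hk' i
          rw [habs, habsk, ← hc0k] at this
          nlinarith [hs k]
      · have := hw' k i
        rw [← hdk, ← hc0k] at this
        nlinarith [hs k]
    · -- v k ≤ -1
      have hdknp : dz (v k) ≤ 0 := by rw [hdk]; linarith
      have hc0np : c0 ≤ 0 := div_nonpos_of_nonpos_of_nonneg hdknp (le_of_lt (hs k))
      constructor
      · have := hw' i k
        rw [← hdk, ← hc0k] at this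
        nlinarith [hs k]
      · rcases le_total (-1) (v i) with h2 | h2
        · nlinarith [hs i]
        · have hdzi : dz (v i) = v i + 1 := (sat_of_le_neg_one h2).2
          have habs : |dz (v i)| = -(v i + 1) := by rw [hdzi]; exact abs_of_nonpos (by linarith)
          have habsk : |dz (v k)| = -dz (v k) := abs_of_nonpos hdknp
          have := hk' i
          rw [habs, habsk, ← hc0k] at this
          nlinarith [hs k]
    · -- -1 ≤ v k ≤ 1
      have hc0 : c0 = 0 := by rw [hc0def, hdk, zero_div]
      have hdzi : dz (v i) = 0 := by
        have h2 := hk i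
        rw [hdk, abs_zero, zero_div] at h2
        have h3 : 0 ≤ |dz (v i)| / s i := div_nonneg (abs_nonneg _) (le_of_lt (hs i))
        have h4 : |dz (v i)| / s i = 0 := le_antisymm h2 h3
        have h5 : |dz (v i)| = 0 := by
          rcases div_eq_zero_iff.mp h4 with h | h
          · exact h
          · exact absurd h (ne_of_gt (hs i))
        exact abs_eq_zero.mp h5
      rcases satdz_cases (v i) with ⟨hle, _, hd⟩ | ⟨hle, _, hd⟩ | ⟨hle, hle', _, _⟩ <;>
        rw [hc0] <;> constructor <;> nlinarith [hs i]
  -- sat and dz of the candidate u0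
  have hu0i : ∀ i, i ≠ k → u0 i = c0 * s i - v i := by
    intro i hik
    rw [hu0 i hik, hc0def]
    show -(v i) + (s i / s k) * dz (v k) = dz (v k) / s k * s i - v i
    ring
  have hsat0k : sat (u0 k) = c0 * s k - v k ∧ dz (u0 k) = -(c0/β) := by
    rcases satdz_cases (v k) with ⟨h1, hsk, hdk⟩ | ⟨h1, hsk, hdk⟩ | ⟨h1, h1', hsk, hdk⟩
    · have hval : u0 k = -1 - (v k - 1) / (β * s k) := by
        rw [hu0k, hsk, hdk]
      have hq : 0 ≤ (v k - 1) / (β * s k) :=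
        div_nonneg (by linarith) (le_of_lt (mul_pos hβ (hs k)))
      have hle : u0 k ≤ -1 := by rw [hval]; linarith
      obtain ⟨hsu, hdu⟩ := sat_of_le_neg_one hle
      have hck : c0 * s k = v k - 1 := by rw [hc0k, hdk]
      refine ⟨by rw [hsu, hck]; ring, ?_⟩
      rw [hdu, hval, hc0def, hdk]
      rw [div_div, mul_comm β (s k)]
      ring
    · have hval : u0 k = 1 - (v k + 1) / (β * s k) := by
        rw [hu0k, hsk, hdk]; ring
      have hq : (v k + 1) / (β * s k) ≤ 0 :=
        div_nonpos_of_nonpos_of_nonneg (by linarith) (le_of_lt (mul_pos hβ (hs k)))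
      have hle : 1 ≤ u0 k := by rw [hval]; linarith
      obtain ⟨hsu, hdu⟩ := sat_of_one_le hle
      have hck : c0 * s k = v k + 1 := by rw [hc0k, hdk]
      refine ⟨by rw [hsu, hck]; ring, ?_⟩
      rw [hdu, hval, hc0def, hdk]
      rw [div_div, mul_comm β (s k)]
      ring
    · have hc0z : c0 = 0 := by rw [hc0def, hdk, zero_div]
      have hval : u0 k = -(v k) := by
        rw [hu0k, hsk, hdk, zero_div]; ring
      obtain ⟨hsu, hdu⟩ := sat_of_mem (u := u0 k) (by rw [hval]; linarith) (by rw [hval]; linarith)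
      refine ⟨by rw [hsu, hval, hc0z]; ring, by rw [hdu, hc0z]; ring⟩
  have hsat0i : ∀ i, i ≠ k → sat (u0 i) = c0 * s i - v i ∧ dz (u0 i) = 0 := by
    intro i hik
    have hval := hu0i i hik
    obtain ⟨hab1, hab2⟩ := hAB i
    obtain ⟨hsu, hdu⟩ := sat_of_mem (u := u0 i) (by rw [hval]; linarith) (by rw [hval]; linarith)
    exact ⟨by rw [hsu, hval], hdu⟩
  have hsat0 : ∀ i, sat (u0 i) = c0 * s i - v i := by
    intro i
    by_cases hik : i = k
    · rw [hik]; exact hsat0k.1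
    · exact (hsat0i i hik).1
  -- existence
  have hx0' : ∀ i, x0 i = c0 := hx0
  have hsumdz0 : ∑ m, dz (u0 m) = -(c0/β) :=
    (Finset.sum_eq_single_of_mem k (Finset.mem_univ k)
      (fun m _ hm => (hsat0i m hm).2)).trans hsat0k.2
  have hex1 : ∀ i, -x0 i + B.mulVec (fun m => sat (u0 m)) i + w i = 0 := by
    intro i
    have hfun : (fun m => sat (u0 m)) = M.mulVec (fun j => c0 - w j) := by
      funext m
      rw [hsat0 m, hcomp c0 m]
    have h4 : B.mulVec (fun m => sat (u0 m)) i = c0 - w i := by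
      rw [hfun, hBM]
    rw [h4, hx0' i]; ring
  have hex2 : ∀ i, x0 i + β * ∑ m, dz (u0 m) = 0 := by
    intro i
    have h5 : β * (c0/β) = c0 := by
      rw [mul_comm]; exact div_mul_cancel₀ _ (ne_of_gt hβ)
    rw [hsumdz0, hx0' i, mul_neg, h5]; ring
  refine ⟨⟨hex1, hex2⟩, ?_⟩
  -- uniqueness
  intro x u heq1 heq2
  have hxc : ∀ i, x i = x k := by
    intro i
    have h1 := heq2 i
    have h2 := heq2 k
    linarith
  set c : ℝ := x k with hcdef
  have hfun : (fun m => sat (u m)) = M.mulVec (fun j => c - w j) := by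
    have h1 : B.mulVec (fun m => sat (u m)) = fun j => c - w j := by
      funext j
      have h2 := heq1 j
      have h3 := hxc j
      linarith
    calc (fun m => sat (u m)) = M.mulVec (B.mulVec (fun m => sat (u m))) := (hMBv _).symm
      _ = M.mulVec (fun j => c - w j) := by rw [h1]
  have hsatu : ∀ i, sat (u i) = c * s i - v i := by
    intro i
    have h6 := congrFun hfun i
    rw [h6, hcomp c i]
  have hbound : ∀ i, v i - 1 ≤ c * s i ∧ c * s i ≤ v i + 1 := by
    intro i
    have h1 := sat_le_one (u i)
    have h2 := neg_one_le_sat (u i)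
    rw [hsatu i] at h1 h2
    constructor <;> linarith
  have hsum : c + β * ∑ m, dz (u m) = 0 := heq2 k
  have hposc : ∀ i, 0 < dz (u i) → c * s i = v i + 1 := by
    intro i h
    rcases satdz_cases (u i) with ⟨_, hsi, _⟩ | ⟨h0, _, hdi⟩ | ⟨_, _, _, hdi⟩
    · have h7 := hsatu i; rw [hsi] at h7; linarith
    · rw [hdi] at h; linarith
    · linarith
  have hnegc : ∀ i, dz (u i) < 0 → c * s i = v i - 1 := by
    intro i h
    rcases satdz_cases (u i) with ⟨h0, _, hdi⟩ | ⟨_, hsi, _⟩ | ⟨_, _, _, hdi⟩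
    · rw [hdi] at h; linarith
    · have h7 := hsatu i; rw [hsi] at h7; linarith
    · linarith
  -- key claim
  have hkey : c = c0 ∧ ∀ j, j ≠ k → dz (u j) = 0 := by
    rcases lt_trichotomy c 0 with hc | hc | hc
    · -- c < 0
      have hsumpos : 0 < ∑ m, dz (u m) := by nlinarith
      obtain ⟨i, hi⟩ : ∃ i, 0 < dz (u i) := by
        by_contra hno
        push_neg at hno
        have h8 : ∑ m, dz (u m) ≤ 0 := Finset.sum_nonpos (fun m _ => hno m)
        linarith
      have hci : c * s i = v i + 1 := hposc i hi
      have hvi : v i < -1 := by nlinarith [hs i, mul_pos (neg_pos.mpr hc) (hs i)]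
      have hdzi : dz (v i) = v i + 1 := (sat_of_le_neg_one hvi.le).2
      have habsi : |dz (v i)| = -(v i + 1) := by rw [hdzi]; exact abs_of_nonpos (by linarith)
      rcases satdz_cases (v k) with ⟨h1, hsk, hdk⟩ | ⟨h1, hsk, hdk⟩ | ⟨h1, h1', hsk, hdk⟩
      · exfalso
        have h9 := (hbound k).1
        nlinarith [hs k]
      · -- v k ≤ -1 : the expected case
        have habsk : |dz (v k)| = -(v k + 1) := by rw [hdk]; exact abs_of_nonpos (by linarith)
        have hkk := hk' i
        rw [habsi, habsk] at hkk
        have hge : v k + 1 ≤ c * s k := by nlinarith [hs i, hs k]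
        have hcsk : c * s k = v k + 1 := le_antisymm (by linarith [(hbound k).2]) hge
        have hceq : c = c0 := by
          refine mul_right_cancel₀ (ne_of_gt (hs k)) ?_
          rw [hcsk, hc0k, hdk]
        refine ⟨hceq, ?_⟩
        have hdkneg : dz (v k) < 0 := by
          rw [hdk]
          nlinarith [mul_pos (neg_pos.mpr hc) (hs k)]
        have hstrict : ∀ j, j ≠ k → |dz (v j)| * s k < |dz (v k)| * s j := by
          rcases huniq with hall | hstr
          · exact absurd (hall k) (ne_of_lt hdkneg)
          · exact fun j hj => (div_lt_div_iff₀ (hs j) (hs k)).mp (hstr j hj)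
        intro j hj
        by_contra hne
        rcases lt_or_gt_of_ne hne with hneg | hpos
        · have hcj : c * s j = v j - 1 := hnegc j hneg
          have h10 := hw' j k
          have h12 : (c * s j) * s k < (c * s k) * s j := by rw [hcj, hcsk]; exact h10
          have h13 : (c * s j) * s k = (c * s k) * s j := by ring
          linarith
        · have hcj : c * s j = v j + 1 := hposc j hpos
          have hvj : v j < -1 := by nlinarith [mul_pos (neg_pos.mpr hc) (hs j)]
          have habsj : |dz (v j)| = -(v j + 1) := by
            rw [(sat_of_le_neg_one hvj.le).2]; exact abs_of_nonpos (by linarith)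
          have h11 := hstrict j hj
          rw [habsj, habsk] at h11
          nlinarith
      · exfalso
        have hkk := hk' i
        rw [habsi, hdk, abs_zero, zero_mul] at hkk
        nlinarith [hs i, hs k, mul_pos (neg_pos.mpr hc) (hs i)]
    · -- c = 0
      have hsum0 : ∑ m, dz (u m) = 0 := by
        have h12 := hsum
        rw [hc, zero_add] at h12
        exact (mul_eq_zero.mp h12).resolve_left (ne_of_gt hβ)
      have hall : ∀ m, dz (u m) = 0 := by
        by_cases hnn : ∀ m, 0 ≤ dz (u m)
        · intro m
          exact (Finset.sum_eq_zero_iff_of_nonneg (fun m _ => hnn m)).mp hsum0 m (Finset.mem_univ m)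
        · exfalso
          push_neg at hnn
          obtain ⟨i, hi⟩ := hnn
          have hci : c * s i = v i - 1 := hnegc i hi
          obtain ⟨j, hj⟩ : ∃ j, 0 < dz (u j) := by
            by_contra hno
            push_neg at hno
            have h13 : ∑ m, dz (u m) < ∑ m : Fin n, (0:ℝ) :=
              Finset.sum_lt_sum (fun m _ => hno m) ⟨i, Finset.mem_univ i, hi⟩
            rw [Finset.sum_const_zero] at h13
            linarith
          have hcj : c * s j = v j + 1 := hposc j hj
          have h14 := hw' i j
          rw [hc] at hci hcj
          nlinarith [hs i, hs j]
      have hvin : ∀ i, -1 ≤ v i ∧ v i ≤ 1 := by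
        intro i
        obtain ⟨h15, h16⟩ := hbound i
        rw [hc, zero_mul] at h15 h16
        exact ⟨by linarith, by linarith⟩
      have hdzk : dz (v k) = 0 := (sat_of_mem (hvin k).1 (hvin k).2).2
      exact ⟨by rw [hc, hc0def, hdzk, zero_div], fun j _ => hall j⟩
    · -- c > 0
      have hsumneg : ∑ m, dz (u m) < 0 := by nlinarith
      obtain ⟨i, hi⟩ : ∃ i, dz (u i) < 0 := by
        by_contra hno
        push_neg at hno
        have h8 : 0 ≤ ∑ m, dz (u m) := Finset.sum_nonneg (fun m _ => hno m)
        linarith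
      have hci : c * s i = v i - 1 := hnegc i hi
      have hvi : 1 < v i := by nlinarith [hs i, mul_pos hc (hs i)]
      have hdzi : dz (v i) = v i - 1 := (sat_of_one_le hvi.le).2
      have habsi : |dz (v i)| = v i - 1 := by rw [hdzi]; exact abs_of_nonneg (by linarith)
      rcases satdz_cases (v k) with ⟨h1, hsk, hdk⟩ | ⟨h1, hsk, hdk⟩ | ⟨h1, h1', hsk, hdk⟩
      · -- 1 ≤ v k : the expected case
        have habsk : |dz (v k)| = v k - 1 := by rw [hdk]; exact abs_of_nonneg (by linarith)
        have hkk := hk' i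
        rw [habsi, habsk] at hkk
        have hle : c * s k ≤ v k - 1 := by nlinarith [hs i, hs k]
        have hcsk : c * s k = v k - 1 := le_antisymm hle (hbound k).1
        have hceq : c = c0 := by
          refine mul_right_cancel₀ (ne_of_gt (hs k)) ?_
          rw [hcsk, hc0k, hdk]
        refine ⟨hceq, ?_⟩
        have hdkpos : 0 < dz (v k) := by
          rw [hdk]
          nlinarith [mul_pos hc (hs k)]
        have hstrict : ∀ j, j ≠ k → |dz (v j)| * s k < |dz (v k)| * s j := by
          rcases huniq with hall | hstr
          · exact absurd (hall k) (ne_of_gt hdkpos)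
          · exact fun j hj => (div_lt_div_iff₀ (hs j) (hs k)).mp (hstr j hj)
        intro j hj
        by_contra hne
        rcases lt_or_gt_of_ne hne with hneg | hpos
        · have hcj : c * s j = v j - 1 := hnegc j hneg
          have hvj : 1 < v j := by nlinarith [mul_pos hc (hs j)]
          have habsj : |dz (v j)| = v j - 1 := by
            rw [(sat_of_one_le hvj.le).2]; exact abs_of_nonneg (by linarith)
          have h11 := hstrict j hj
          rw [habsj, habsk] at h11
          nlinarith
        · have hcj : c * s j = v j + 1 := hposc j hpos
          have h10 := hw' k j
          have h12 : (c * s k) * s j < (c * s j) * s k := by rw [hcsk, hcj]; exact h10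
          have h13 : (c * s k) * s j = (c * s j) * s k := by ring
          linarith
      · exfalso
        have h9 := (hbound k).2
        nlinarith [hs k]
      · exfalso
        have hkk := hk' i
        rw [habsi, hdk, abs_zero, zero_mul] at hkk
        nlinarith [hs i, hs k, mul_pos hc (hs i)]
  obtain ⟨hceq, hdzu⟩ := hkey
  constructor
  · funext i
    rw [hxc i, hx0' i]
    exact hceq
  · funext i
    by_cases hik : i = k
    · subst hik
      have hsumu : ∑ m, dz (u m) = dz (u i) :=
        Finset.sum_eq_single_of_mem i (Finset.mem_univ i) (fun m _ hm => hdzu m hm)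
      have e1 : β * dz (u i) = -c := by
        rw [← hsumu]; linarith
      have e2 : β * dz (u0 i) = -c := by
        rw [hsat0k.2, mul_neg, mul_comm β, div_mul_cancel₀ _ (ne_of_gt hβ), hceq]
      have e3 : dz (u i) = dz (u0 i) := mul_left_cancel₀ (ne_of_gt hβ) (e1.trans e2.symm)
      rw [← sat_add_dz (u i), ← sat_add_dz (u0 i), hsatu i, hsat0k.1, e3, hceq]
    · rw [← sat_add_dz (u i), ← sat_add_dz (u0 i), hsatu i, (hsat0i i hik).1,
        (hsat0i i hik).2, hdzu i hik, hceq]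
end
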